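/- Let R be confluent and let B be a set of normal forms closed under R-equivalence in the sense that no element of B has an R-successor. Then a state σ belongs to μX.(⟨R⟩(X) ∪ B) if and only if there is a finite reduction from σ to some element of B; moreover, if σ ∈ μX.(⟨R⟩(X) ∪ B) and σ R* τ, then τ ∈ μX.(⟨R⟩(X) ∪ B). -/

import Mathlib

/-! Unfolding the fixpoint once shows that `lfpDiam R B` contains everything that reduces to `B`,
and least-fixpoint induction shows it contains nothing else. Closure under reduction then comes
from confluence: if `σ →* b ∈ B` and `σ →* τ`, then `b` and `τ` have a common reduct, which must be
`b` itself since `b` is in normal form; hence `τ →* b`. -/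

def diamHom {S : Type*} (R : S → S → Prop) : Set S →o Set S :=
  ⟨fun X => {σ | ∃ σ', R σ σ' ∧ σ' ∈ X}, by
    intro X Y h σ ⟨σ', hR, hm⟩
    exact ⟨σ', hR, h hm⟩⟩

def lfpDiam {S : Type*} (R : S → S → Prop) (B : Set S) : Set S :=
  OrderHom.lfp ⟨fun X => diamHom R X ∪ B,
    fun _ _ h => Set.union_subset_union ((diamHom R).mono h) le_rfl⟩

namespace Relation.ReflTransGen

variable {S : Type*} {R : S → S → Prop}

theorem eq_of_forall_not_rel {b c : S} (hb : ∀ τ, ¬ R b τ) (h : ReflTransGen R b c) : b = c :=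
  h.cases_head.resolve_right fun ⟨τ, hbτ, _⟩ => hb τ hbτ

theorem of_confluent_of_normal {σ τ b : S}
    (hconf : ∀ σ σ₁ σ₂, ReflTransGen R σ σ₁ → ReflTransGen R σ σ₂ →
      ∃ σ', ReflTransGen R σ₁ σ' ∧ ReflTransGen R σ₂ σ')
    (hb : ∀ τ, ¬ R b τ) (hσb : ReflTransGen R σ b) (hστ : ReflTransGen R σ τ) :
    ReflTransGen R τ b := by
  obtain ⟨c, hbc, hτc⟩ := hconf σ b τ hσb hστ
  rwa [← eq_of_forall_not_rel hb hbc] at hτc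

end Relation.ReflTransGen

section lfpDiam

variable {S : Type*} {R : S → S → Prop} {B : Set S}

theorem diamHom_lfpDiam_union_eq : diamHom R (lfpDiam R B) ∪ B = lfpDiam R B := by
  conv_rhs => rw [lfpDiam, ← OrderHom.map_lfp]
  rfl

theorem mem_lfpDiam_of_reflTransGen {σ b : S} (hb : b ∈ B) (h : Relation.ReflTransGen R σ b) :
    σ ∈ lfpDiam R B := by
  rw [← diamHom_lfpDiam_union_eq]
  induction h using Relation.ReflTransGen.head_induction_on with
  | refl => exact Or.inr hb
  | head hR _ ih => exact Or.inl ⟨_, hR, diamHom_lfpDiam_union_eq ▸ ih⟩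

theorem lfpDiam_subset_setOf_reflTransGen :
    lfpDiam R B ⊆ {σ | ∃ b ∈ B, Relation.ReflTransGen R σ b} := by
  refine OrderHom.lfp_le _ ?_
  rintro σ (⟨σ', hR, b, hb, hσ'b⟩ | hb)
  · exact ⟨b, hb, .head hR hσ'b⟩
  · exact ⟨σ, hb, .refl⟩

theorem mem_lfpDiam_iff {σ : S} : σ ∈ lfpDiam R B ↔ ∃ b ∈ B, Relation.ReflTransGen R σ b :=
  ⟨fun h => lfpDiam_subset_setOf_reflTransGen h,
    fun ⟨_, hb, h⟩ => mem_lfpDiam_of_reflTransGen hb h⟩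

end lfpDiam

/-- For confluent R and a set B of normal forms: membership in the least fixpoint
is reachability of B, and the fixpoint is closed under reduction. -/
theorem lfp_confluent_char {S : Type*} (R : S → S → Prop) (B : Set S)
    (hconf : ∀ σ σ₁ σ₂, Relation.ReflTransGen R σ σ₁ → Relation.ReflTransGen R σ σ₂ →
      ∃ σ', Relation.ReflTransGen R σ₁ σ' ∧ Relation.ReflTransGen R σ₂ σ')
    (hB : ∀ b ∈ B, ¬ ∃ τ, R b τ) :
    (∀ σ, σ ∈ lfpDiam R B ↔ ∃ b ∈ B, Relation.ReflTransGen R σ b) ∧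
    (∀ σ τ, σ ∈ lfpDiam R B → Relation.ReflTransGen R σ τ → τ ∈ lfpDiam R B) := by
  refine ⟨fun σ => mem_lfpDiam_iff, fun σ τ hσ hστ => ?_⟩
  obtain ⟨b, hb, hσb⟩ := mem_lfpDiam_iff.mp hσ
  have hnormal : ∀ τ, ¬ R b τ := fun τ hbτ => hB b hb ⟨τ, hbτ⟩
  exact mem_lfpDiam_of_reflTransGen hb (hσb.of_confluent_of_normal hconf hnormal hστ)
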